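/- Let (Ω, μ) and (Ξ, ν) be finite complete measure spaces, p a variable exponent on Ω with conjugate p', and q a variable exponent on Ξ. Let (g_n) be a sequence in L^{q(·)}(ν) and (h_n) a sequence in L^{p'(·)}(μ) with Σ_n ||g_n||_{L^{q(·)}} ||h_n||_{L^{p'(·)}} < ∞. Then the series Σ_{j=1}^∞ g_j(x) h_j(y) converges absolutely for (ν⊗μ)-almost every (x,y). -/
import Mathlib


open MeasureTheory Filter Topology ENNReal

/-- The contribution `|t|^{q}` to the variable-exponent modular, with the usual
convention at `q = ∞` (zero if `t ≤ 1`, infinite otherwise). -/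
noncomputable def evpow (t : ℝ) (q : ℝ≥0∞) : ℝ≥0∞ :=
  if q = ∞ then (if t ≤ 1 then 0 else ∞) else ENNReal.ofReal t ^ q.toReal

/-- The modular `∫ |f(x)/λ|^{p(x)} dμ` of a variable exponent Lebesgue space. -/
noncomputable def eModular {Ω : Type*} [MeasurableSpace Ω] (μ : Measure Ω)
    (p : Ω → ℝ≥0∞) {E : Type*} [NormedAddCommGroup E] (f : Ω → E) (lam : ℝ) : ℝ≥0∞ :=
  ∫⁻ x, evpow (‖f x‖ / lam) (p x) ∂μ

/-- The Luxemburg norm of the variable exponent Lebesgue space `L^{p(·)}(μ)`. -/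
noncomputable def eVNorm {Ω : Type*} [MeasurableSpace Ω] (μ : Measure Ω)
    (p : Ω → ℝ≥0∞) {E : Type*} [NormedAddCommGroup E] (f : Ω → E) : ℝ :=
  sInf {lam : ℝ | 0 < lam ∧ eModular μ p f lam ≤ 1}

/-- Membership in the variable exponent Lebesgue space `L^{p(·)}(μ)`. -/
def MemEVLp {Ω : Type*} [MeasurableSpace Ω] (μ : Measure Ω)
    (p : Ω → ℝ≥0∞) {E : Type*} [NormedAddCommGroup E] (f : Ω → E) : Prop :=
  AEStronglyMeasurable f μ ∧ ∃ lam : ℝ, 0 < lam ∧ eModular μ p f lam ≤ 1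

/-- The variable exponent sequence space norm `‖h‖_{ℓ^{q(·)}}`. -/
noncomputable def eSeqNorm {I : Type*} (q : I → ℝ≥0∞) {E : Type*} [NormedAddCommGroup E]
    (h : I → E) : ℝ :=
  sInf {lam : ℝ | 0 < lam ∧ ∑' i, evpow (‖h i‖ / lam) (q i) ≤ 1}

lemma ofReal_le_one_add_evpow (t : ℝ) {q : ℝ≥0∞} (hq : 1 ≤ q) :
    ENNReal.ofReal t ≤ 1 + evpow t q := by
  unfold evpow
  split_ifs with h1 h2
  · exact le_trans (ENNReal.ofReal_le_one.2 h2) le_self_add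
  · simp
  · rcases le_or_gt t 1 with ht | ht
    · exact le_trans (ENNReal.ofReal_le_one.2 ht) le_self_add
    · refine le_trans ?_ le_add_self
      calc ENNReal.ofReal t = (ENNReal.ofReal t) ^ (1 : ℝ) := (ENNReal.rpow_one _).symm
        _ ≤ (ENNReal.ofReal t) ^ q.toReal := by
            apply ENNReal.rpow_le_rpow_of_exponent_le
            · exact ENNReal.one_le_ofReal.2 ht.le
            · simpa using ENNReal.toReal_mono h1 hq

lemma lintegral_abs_le_of_modular {Ω : Type*} [MeasurableSpace Ω] (μ : Measure Ω)
    [IsFiniteMeasure μ] (p : Ω → ℝ≥0∞) (hp : ∀ x, 1 ≤ p x) (f : Ω → ℝ) {lam : ℝ}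
    (hlam : 0 < lam) (hmod : eModular μ p f lam ≤ 1) :
    ∫⁻ x, ENNReal.ofReal |f x| ∂μ ≤ ENNReal.ofReal lam * (μ Set.univ + 1) := by
  have key : ∀ x, ENNReal.ofReal |f x| = ENNReal.ofReal lam * ENNReal.ofReal (|f x| / lam) := by
    intro x
    rw [← ENNReal.ofReal_mul hlam.le]
    congr 1
    field_simp
  calc ∫⁻ x, ENNReal.ofReal |f x| ∂μ
      = ENNReal.ofReal lam * ∫⁻ x, ENNReal.ofReal (|f x| / lam) ∂μ := by
        simp_rw [key]; exact lintegral_const_mul' _ _ ENNReal.ofReal_ne_top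
    _ ≤ ENNReal.ofReal lam * ∫⁻ x, (1 + evpow (|f x| / lam) (p x)) ∂μ := by
        gcongr with x
        exact ofReal_le_one_add_evpow _ (hp x)
    _ = ENNReal.ofReal lam * (μ Set.univ + eModular μ p f lam) := by
        rw [lintegral_add_left measurable_const, lintegral_const, one_mul]
        simp [eModular, Real.norm_eq_abs]
    _ ≤ ENNReal.ofReal lam * (μ Set.univ + 1) := by gcongr

lemma eVNorm_nonneg {Ω : Type*} [MeasurableSpace Ω] (μ : Measure Ω)
    (p : Ω → ℝ≥0∞) (f : Ω → ℝ) : 0 ≤ eVNorm μ p f :=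
  Real.sInf_nonneg (fun _ hx => hx.1.le)

lemma exists_lam_lt {Ω : Type*} [MeasurableSpace Ω] {μ : Measure Ω}
    {p : Ω → ℝ≥0∞} {f : Ω → ℝ} (hf : MemEVLp μ p f) {ε : ℝ} (hε : 0 < ε) :
    ∃ lam : ℝ, 0 < lam ∧ eModular μ p f lam ≤ 1 ∧ lam < eVNorm μ p f + ε := by
  obtain ⟨lam, h1, h2⟩ := hf.2
  obtain ⟨a, ha, hlt⟩ := Real.lt_sInf_add_pos (s := {lam : ℝ | 0 < lam ∧ eModular μ p f lam ≤ 1})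
    ⟨lam, h1, h2⟩ hε
  exact ⟨a, ha.1, ha.2, hlt⟩

/-- If `(g_n) ⊆ L^{q(·)}(ν)`, `(h_n) ⊆ L^{p'(·)}(μ)` over finite complete measure spaces with
`Σ_n ‖g_n‖ ‖h_n‖ < ∞`, then `Σ_j g_j(x) h_j(y)` converges absolutely for a.e. `(x,y)`. -/
theorem kernel_series_abs_convergent_ae
    {Ω Ξ : Type*} [MeasurableSpace Ω] [MeasurableSpace Ξ]
    (μ : Measure Ω) (ν : Measure Ξ) [IsFiniteMeasure μ] [IsFiniteMeasure ν]
    (hμc : μ.IsComplete) (hνc : ν.IsComplete)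
    (p p' : Ω → ℝ≥0∞) (hp : ∀ x, 1 ≤ p x) (hconj : ∀ x, 1 / p x + 1 / p' x = 1)
    (q : Ξ → ℝ≥0∞) (hq : ∀ x, 1 ≤ q x)
    (g : ℕ → Ξ → ℝ) (h : ℕ → Ω → ℝ)
    (hg : ∀ n, MemEVLp ν q (g n)) (hh : ∀ n, MemEVLp μ p' (h n))
    (hsum : Summable fun n => eVNorm ν q (g n) * eVNorm μ p' (h n)) :
    ∀ᵐ z ∂(ν.prod μ), Summable fun j => |g j z.1 * h j z.2| := by
  have hp' : ∀ x, 1 ≤ p' x := by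
    intro x
    have h1 : 1 / p' x ≤ 1 / p x + 1 / p' x := le_add_self
    rw [hconj x] at h1
    rwa [one_div, ENNReal.inv_le_one] at h1
  set N : ℕ → ℝ := fun j => eVNorm ν q (g j) with hNdef
  set M : ℕ → ℝ := fun j => eVNorm μ p' (h j) with hMdef
  have hNn : ∀ j, 0 ≤ N j := fun j => eVNorm_nonneg ν q (g j)
  have hMn : ∀ j, 0 ≤ M j := fun j => eVNorm_nonneg μ p' (h j)
  have hchoice : ∀ j : ℕ, ∃ lk : ℝ × ℝ,
      (0 < lk.1 ∧ eModular ν q (g j) lk.1 ≤ 1) ∧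
      (0 < lk.2 ∧ eModular μ p' (h j) lk.2 ≤ 1) ∧
      lk.1 * lk.2 ≤ N j * M j + 2 * (1/2 : ℝ) ^ j := by
    intro j
    have hden : (0:ℝ) < 1 + N j + M j := by nlinarith [hNn j, hMn j]
    set ε : ℝ := (1/2 : ℝ) ^ j / (1 + N j + M j) with hεdef
    have hεpos : 0 < ε := div_pos (by positivity) hden
    obtain ⟨lam, hl1, hl2, hl3⟩ := exists_lam_lt (hg j) hεpos
    obtain ⟨kap, hk1, hk2, hk3⟩ := exists_lam_lt (hh j) hεpos
    refine ⟨(lam, kap), ⟨hl1, hl2⟩, ⟨hk1, hk2⟩, ?_⟩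
    have hkey : (1 + N j + M j) * ε = (1/2 : ℝ) ^ j := by
      rw [hεdef]; field_simp
    have hε1 : ε ≤ 1 := by
      rw [hεdef]
      have h2 : (1/2 : ℝ) ^ j ≤ 1 := pow_le_one₀ (by norm_num) (by norm_num)
      calc (1/2 : ℝ) ^ j / (1 + N j + M j) ≤ (1/2 : ℝ) ^ j / 1 := by
            apply div_le_div_of_nonneg_left (by positivity) one_pos (by linarith [hNn j, hMn j])
        _ ≤ 1 := by simpa using h2
    have hmul : lam * kap ≤ (N j + ε) * (M j + ε) :=
      mul_le_mul hl3.le hk3.le hk1.le (by linarith [hNn j])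
    nlinarith [hmul, hkey, hε1, hεpos, hNn j, hMn j, mul_nonneg (hNn j) hεpos.le,
      mul_nonneg (hMn j) hεpos.le]
  choose lk hlk1 hlk2 hlk3 using hchoice
  have hsum2 : Summable fun j => (lk j).1 * (lk j).2 := by
    refine Summable.of_nonneg_of_le (fun j => mul_nonneg (hlk1 j).1.le (hlk2 j).1.le)
      (fun j => hlk3 j) ?_
    exact hsum.add (summable_geometric_two.mul_left 2)
  have hgm : ∀ j, AEMeasurable (fun x => ENNReal.ofReal |g j x|) ν := fun j => by
    simpa [Real.norm_eq_abs] using (hg j).1.norm.aemeasurable.ennreal_ofReal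
  have hhm : ∀ j, AEMeasurable (fun y => ENNReal.ofReal |h j y|) μ := fun j => by
    simpa [Real.norm_eq_abs] using (hh j).1.norm.aemeasurable.ennreal_ofReal
  have hFmeas : ∀ j, AEMeasurable
      (fun z : Ξ × Ω => ENNReal.ofReal |g j z.1| * ENNReal.ofReal |h j z.2|) (ν.prod μ) :=
    fun j =>
      ((hgm j).comp_quasiMeasurePreserving Measure.quasiMeasurePreserving_fst).mul
        ((hhm j).comp_quasiMeasurePreserving Measure.quasiMeasurePreserving_snd)
  set C : ℝ≥0∞ := (ν Set.univ + 1) * (μ Set.univ + 1) with hCdef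
  have hCfin : C ≠ ∞ := by
    rw [hCdef]
    exact (ENNReal.mul_lt_top (by finiteness) (by finiteness)).ne
  have key : ∫⁻ z, ∑' j, (ENNReal.ofReal |g j z.1| * ENNReal.ofReal |h j z.2|) ∂(ν.prod μ)
      < ∞ := by
    rw [lintegral_tsum hFmeas]
    have hterm : ∀ j, ∫⁻ z, (ENNReal.ofReal |g j z.1| * ENNReal.ofReal |h j z.2|) ∂(ν.prod μ)
        ≤ C * ENNReal.ofReal ((lk j).1 * (lk j).2) := by
      intro j
      rw [lintegral_prod_mul (hgm j) (hhm j)]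
      calc (∫⁻ x, ENNReal.ofReal |g j x| ∂ν) * ∫⁻ y, ENNReal.ofReal |h j y| ∂μ
          ≤ (ENNReal.ofReal (lk j).1 * (ν Set.univ + 1)) *
            (ENNReal.ofReal (lk j).2 * (μ Set.univ + 1)) :=
            mul_le_mul'
              (lintegral_abs_le_of_modular ν q hq (g j) (hlk1 j).1 (hlk1 j).2)
              (lintegral_abs_le_of_modular μ p' hp' (h j) (hlk2 j).1 (hlk2 j).2)
        _ = C * ENNReal.ofReal ((lk j).1 * (lk j).2) := by
            rw [ENNReal.ofReal_mul (hlk1 j).1.le, hCdef]; ring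
    calc ∑' j, ∫⁻ z, (ENNReal.ofReal |g j z.1| * ENNReal.ofReal |h j z.2|) ∂(ν.prod μ)
        ≤ ∑' j, C * ENNReal.ofReal ((lk j).1 * (lk j).2) := ENNReal.tsum_le_tsum hterm
      _ = C * ∑' j, ENNReal.ofReal ((lk j).1 * (lk j).2) := ENNReal.tsum_mul_left
      _ = C * ENNReal.ofReal (∑' j, (lk j).1 * (lk j).2) := by
          rw [ENNReal.ofReal_tsum_of_nonneg
            (fun j => mul_nonneg (hlk1 j).1.le (hlk2 j).1.le) hsum2]
      _ < ∞ := ENNReal.mul_lt_top hCfin.lt_top ENNReal.ofReal_lt_top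
  have hae := ae_lt_top' (AEMeasurable.ennreal_tsum hFmeas) key.ne
  filter_upwards [hae] with z hz
  have hz' : ∑' j, ENNReal.ofReal |g j z.1 * h j z.2| ≠ ∞ := by
    simp_rw [abs_mul, ENNReal.ofReal_mul (abs_nonneg _)]
    exact hz.ne
  exact (ENNReal.summable_toReal hz').congr fun j => ENNReal.toReal_ofReal (abs_nonneg _)
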